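/- There exists a constant c > 0 such that for all n ≥ 1 one has r_3(ℤ_4^n) ≥ c · 3^n / √n. In particular, there exists a progression-free set S ⊆ (ℤ/4ℤ)^n (no proper 3-term arithmetic progression) with |S| ≥ 4^{0.7924 n} for all sufficiently large n. -/

import Mathlib

/-!
Let `S_k ⊆ (ℤ/4ℤ)^n` be the set of vectors with all coordinates in `{0, 1, 2}` and exactly `k`
coordinates equal to `1`. If `x, y, z ∈ S_k` with `x + z = 2y`, then in each coordinate
`[xᵢ = 1] + [zᵢ = 1] + 2 [xᵢ ≠ zᵢ] = 2 [yᵢ = 1]`; summing over `i` gives `x = z`, so `S_k` is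
progression-free.

`|S_k| = C(n, k) 2^(n-k) = 3^n b_{n,k}(1/3)`, with `b_{n,k}` the Bernstein polynomials. These
binomial weights have mean `n/3` and variance `2n/9`, so by Chebyshev's inequality at least half
of their mass lies on the `O(√n)` values of `k` with `|k - n/3| ≤ 2√n/3`, and one of them has
`|S_k| ≥ (3/14) 3^n / √n`. The second bound follows because `4^0.7924 < 3`.
-/

/-- `S ⊆ (ℤ/mℤ)^n` contains no proper `k`-term arithmetic progression. -/
def ProgFree (m k : ℕ) {n : ℕ} (S : Finset (Fin n → ZMod m)) : Prop :=
  ¬ ∃ x d : Fin n → ZMod m,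
      (Function.Injective fun i : Fin k => x + (i : ℕ) • d) ∧
      ∀ i : Fin k, x + (i : ℕ) • d ∈ S

/-- Maximal size of a subset of `(ℤ/mℤ)^n` without a proper `k`-term AP. -/
noncomputable def rAP (k m n : ℕ) : ℕ :=
  sSup {c : ℕ | ∃ S : Finset (Fin n → ZMod m), ProgFree m k S ∧ S.card = c}

open Finset Filter Polynomial

lemma card_le_rAP {k m n : ℕ} [NeZero m] {S : Finset (Fin n → ZMod m)} (hS : ProgFree m k S) :
    #S ≤ rAP k m n :=
  le_csSup ⟨Fintype.card (Fin n → ZMod m), by rintro c ⟨T, -, rfl⟩; exact T.card_le_univ⟩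
    ⟨S, hS, rfl⟩

def ternarySlice (n k : ℕ) : Finset (Fin n → ZMod 4) :=
  {x ∈ Fintype.piFinset fun _ => {0, 1, 2} | #{i | x i = 1} = k}

lemma filter_ternarySlice_eq_piFinset {n k : ℕ} {A : Finset (Fin n)} (hA : #A = k) :
    {x ∈ ternarySlice n k | ({i | x i = 1} : Finset (Fin n)) = A} =
      Fintype.piFinset fun i => if i ∈ A then {1} else {0, 2} := by
  ext x
  simp only [ternarySlice, mem_filter, Fintype.mem_piFinset]
  constructor
  · rintro ⟨⟨hx, -⟩, rfl⟩ i
    have := hx i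
    by_cases hi : x i = 1 <;> simp_all
  · intro hx
    have hones : ({i | x i = 1} : Finset (Fin n)) = A := by
      ext i
      have := hx i
      by_cases hi : i ∈ A <;> simp_all; rcases this with h | h <;> simp [h] <;> decide
    refine ⟨⟨fun i => ?_, hones ▸ hA⟩, hones⟩
    have := hx i
    split_ifs at this <;> simp_all; tauto

lemma card_ternarySlice (n k : ℕ) : #(ternarySlice n k) = n.choose k * 2 ^ (n - k) := by
  have hmaps : Set.MapsTo (fun x : Fin n → ZMod 4 => ({i | x i = 1} : Finset (Fin n)))
      (ternarySlice n k) (powersetCard k (univ : Finset (Fin n))) := fun x hx => by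
    rw [mem_coe, ternarySlice, mem_filter] at hx
    simpa using hx.2
  rw [card_eq_sum_card_fiberwise hmaps, sum_congr rfl (g := fun _ => 2 ^ (n - k)), sum_const,
    card_powersetCard, card_univ, Fintype.card_fin, smul_eq_mul]
  intro A hA
  rw [mem_powersetCard] at hA
  have h02 : #({0, 2} : Finset (ZMod 4)) = 2 := rfl
  simp only [filter_ternarySlice_eq_piFinset hA.2, Fintype.card_piFinset, apply_ite card,
    card_singleton, h02, prod_ite, prod_const_one, one_mul, prod_const]
  simp [filter_notMem_eq_sdiff, card_sdiff, hA.2]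

lemma card_eq_one_add_card_eq_one_add_two_mul_card_ne {n : ℕ} {x y z : Fin n → ZMod 4}
    (hx : ∀ i, x i ∈ ({0, 1, 2} : Finset (ZMod 4))) (hy : ∀ i, y i ∈ ({0, 1, 2} : Finset (ZMod 4)))
    (hz : ∀ i, z i ∈ ({0, 1, 2} : Finset (ZMod 4))) (hxz : ∀ i, x i + z i = 2 * y i) :
    #{i | x i = 1} + #{i | z i = 1} + 2 * #{i | x i ≠ z i} = 2 * #{i | y i = 1} := by
  have hcoord : ∀ a b c : ZMod 4, a ∈ ({0, 1, 2} : Finset (ZMod 4)) →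
      b ∈ ({0, 1, 2} : Finset (ZMod 4)) → c ∈ ({0, 1, 2} : Finset (ZMod 4)) → a + c = 2 * b →
      (if a = 1 then 1 else 0) + (if c = 1 then 1 else 0) + 2 * (if a ≠ c then 1 else 0) =
        2 * (if b = 1 then 1 else 0) := by
    decide
  simp only [card_filter, mul_sum, ← sum_add_distrib]
  exact sum_congr rfl fun i _ => hcoord _ _ _ (hx i) (hy i) (hz i) (hxz i)

lemma progFree_ternarySlice (n k : ℕ) : ProgFree 4 3 (ternarySlice n k) := by
  rintro ⟨x, d, hinj, hmem⟩
  have h0 : x ∈ ternarySlice n k := by simpa using hmem 0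
  have h1 : x + d ∈ ternarySlice n k := by simpa using hmem 1
  have h2 : x + 2 • d ∈ ternarySlice n k := by simpa using hmem 2
  simp only [ternarySlice, mem_filter, Fintype.mem_piFinset] at h0 h1 h2
  have hsum := card_eq_one_add_card_eq_one_add_two_mul_card_ne h0.1 h1.1 h2.1 fun i => by
    simp only [Pi.add_apply, two_nsmul]
    ring
  have hxz : x = x + 2 • d := by
    ext i
    by_contra hi
    have : 0 < #{i | x i ≠ (x + 2 • d) i} := card_pos.2 ⟨i, by simpa using hi⟩
    omega
  exact absurd (hinj (by simpa using hxz) : (0 : Fin 3) = 2) (by decide)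

lemma card_le_two_mul_add_one_of_abs_sub_le {s : Finset ℕ} {μ r : ℝ} (hr : 0 ≤ r)
    (hs : ∀ k ∈ s, |(k : ℝ) - μ| ≤ r) : (#s : ℝ) ≤ 2 * r + 1 := by
  rcases s.eq_empty_or_nonempty with rfl | hne
  · simp; linarith
  have hmin := hs _ (s.min'_mem hne)
  have hmax := hs _ (s.max'_mem hne)
  have hle : s.min' hne ≤ s.max' hne := s.min'_le _ (s.max'_mem hne)
  have hcard : #s ≤ s.max' hne + 1 - s.min' hne := by
    rw [← Nat.card_Icc]
    exact card_le_card fun k hk => mem_Icc.2 ⟨s.min'_le k hk, s.le_max' k hk⟩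
  calc (#s : ℝ) ≤ (s.max' hne : ℝ) - s.min' hne + 1 := by
        rw [← Nat.cast_sub hle]; exact_mod_cast (by omega : #s ≤ s.max' hne - s.min' hne + 1)
    _ ≤ 2 * r + 1 := by
        rw [abs_le] at hmin hmax; linarith

lemma exists_mul_ge_one_of_sum_mul_sq_le {s : Finset ℕ} {p : ℕ → ℝ} {μ r : ℝ}
    (hp : ∀ k ∈ s, 0 ≤ p k) (hsum : ∑ k ∈ s, p k = 1)
    (hvar : ∑ k ∈ s, p k * ((k : ℝ) - μ) ^ 2 ≤ r ^ 2 / 2) (hr : 0 < r) :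
    ∃ k ∈ s, 1 ≤ 2 * (2 * r + 1) * p k := by
  set W := s.filter fun k : ℕ => |(k : ℝ) - μ| ≤ r
  have hfar : ∑ k ∈ s.filter (fun k : ℕ => ¬ |(k : ℝ) - μ| ≤ r), p k ≤ 1 / 2 :=
    calc ∑ k ∈ s.filter (fun k : ℕ => ¬ |(k : ℝ) - μ| ≤ r), p k
        ≤ ∑ k ∈ s.filter (fun k : ℕ => ¬ |(k : ℝ) - μ| ≤ r), p k * ((k : ℝ) - μ) ^ 2 / r ^ 2 := by
          refine sum_le_sum fun k hk => ?_
          rw [mem_filter, not_le] at hk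
          rw [le_div_iff₀ (by positivity)]
          have : r ^ 2 ≤ ((k : ℝ) - μ) ^ 2 := by
            rw [← sq_abs ((k : ℝ) - μ)]; exact pow_le_pow_left₀ hr.le hk.2.le 2
          exact mul_le_mul_of_nonneg_left this (hp k hk.1)
      _ ≤ ∑ k ∈ s, p k * ((k : ℝ) - μ) ^ 2 / r ^ 2 :=
          sum_le_sum_of_subset_of_nonneg (filter_subset _ _) fun k hk _ => by
            have := hp k hk; positivity
      _ = (∑ k ∈ s, p k * ((k : ℝ) - μ) ^ 2) / r ^ 2 := by rw [sum_div]
      _ ≤ 1 / 2 := by rw [div_le_iff₀ (by positivity)]; linarith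
  have hnear : 1 / 2 ≤ ∑ k ∈ W, p k := by
    linarith [sum_filter_add_sum_filter_not s (fun k : ℕ => |(k : ℝ) - μ| ≤ r) p]
  have hne : W.Nonempty := nonempty_of_sum_ne_zero (f := p) (by linarith)
  obtain ⟨k, hkW, hkmax⟩ := W.exists_max_image p hne
  refine ⟨k, (mem_filter.1 hkW).1, ?_⟩
  have hcard : (#W : ℝ) ≤ 2 * r + 1 :=
    card_le_two_mul_add_one_of_abs_sub_le hr.le fun j hj => (mem_filter.1 hj).2
  have hp0 := hp k (mem_filter.1 hkW).1
  calc 1 ≤ 2 * ∑ j ∈ W, p j := by linarith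
    _ ≤ 2 * (#W * p k) := by
        gcongr; simpa using sum_le_card_nsmul W p (p k) hkmax
    _ ≤ 2 * (2 * r + 1) * p k := by nlinarith

lemma three_pow_mul_eval_bernsteinPolynomial {n k : ℕ} (hk : k ≤ n) :
    3 ^ n * (bernsteinPolynomial ℝ n k).eval (1 / 3) = n.choose k * 2 ^ (n - k) := by
  simp only [bernsteinPolynomial, eval_mul, eval_pow, eval_sub, eval_X, eval_natCast, eval_one]
  calc (3 : ℝ) ^ n * (n.choose k * (1 / 3) ^ k * (1 - 1 / 3) ^ (n - k))
      = n.choose k * (3 * (1 / 3)) ^ k * (3 * (1 - 1 / 3)) ^ (n - k) := by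
        rw [mul_pow, mul_pow, ← Nat.add_sub_cancel' hk, pow_add, Nat.add_sub_cancel_left]; ring
    _ = n.choose k * 2 ^ (n - k) := by norm_num

lemma sum_eval_bernsteinPolynomial_mul_sq (n : ℕ) :
    ∑ k ∈ range (n + 1), (bernsteinPolynomial ℝ n k).eval (1 / 3) * ((k : ℝ) - n / 3) ^ 2 =
      2 * (n : ℝ) / 9 := by
  have h := congrArg (eval (1 / 3 : ℝ)) (bernsteinPolynomial.variance ℝ n)
  simp only [eval_finsetSum, eval_mul, eval_pow, eval_sub, eval_X, eval_natCast, eval_one,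
    nsmul_eq_mul] at h
  convert h using 1
  · exact sum_congr rfl fun k _ => by ring
  · ring

lemma exists_card_ternarySlice_ge {n : ℕ} (hn : 1 ≤ n) :
    ∃ k, 3 / 14 * 3 ^ n / √n ≤ #(ternarySlice n k) := by
  have hsqrt : 1 ≤ √(n : ℝ) := Real.one_le_sqrt.2 (by exact_mod_cast hn)
  have hsum : ∑ k ∈ range (n + 1), (bernsteinPolynomial ℝ n k).eval (1 / 3) = 1 := by
    simpa [eval_finsetSum] using congrArg (eval (1 / 3 : ℝ)) (bernsteinPolynomial.sum ℝ n)
  have hvar : ∑ k ∈ range (n + 1), (bernsteinPolynomial ℝ n k).eval (1 / 3) * ((k : ℝ) - n / 3) ^ 2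
      ≤ (2 * √n / 3) ^ 2 / 2 := by
    rw [sum_eval_bernsteinPolynomial_mul_sq, div_pow, mul_pow, Real.sq_sqrt (Nat.cast_nonneg n)]
    linarith
  obtain ⟨k, hk, hpk⟩ := exists_mul_ge_one_of_sum_mul_sq_le
    (fun k _ => by simp only [bernsteinPolynomial, eval_mul, eval_pow, eval_sub, eval_X,
      eval_natCast, eval_one]; positivity) hsum hvar (by positivity)
  refine ⟨k, ?_⟩
  rw [card_ternarySlice, Nat.cast_mul, Nat.cast_pow, Nat.cast_ofNat,
    ← three_pow_mul_eval_bernsteinPolynomial (Nat.lt_succ_iff.1 (mem_range.1 hk)),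
    div_le_iff₀ (by positivity)]
  have : 3 / 14 ≤ (bernsteinPolynomial ℝ n k).eval (1 / 3) * √n := by nlinarith
  have h3 : (0 : ℝ) < 3 ^ n := by positivity
  nlinarith

lemma eventually_pow_le_mul_pow_div_sqrt {a b c : ℝ} (hb : 0 < b) (hba : b < a) (hc : 0 < c) :
    ∀ᶠ n : ℕ in atTop, b ^ n ≤ c * a ^ n / √n := by
  have hlim := tendsto_pow_const_div_const_pow_of_one_lt 1 ((one_lt_div hb).2 hba)
  filter_upwards [hlim.eventually (Iio_mem_nhds hc), eventually_ge_atTop 1] with n hn h1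
  have hsqrt : √(n : ℝ) ≤ n := Real.sqrt_le_self_iff.2 (Or.inr (by exact_mod_cast h1))
  have hsqrt0 : 0 < √(n : ℝ) := Real.sqrt_pos.2 (by exact_mod_cast h1)
  rw [pow_one, div_pow, div_div_eq_mul_div, div_lt_iff₀ (pow_pos (hb.trans hba) n)] at hn
  rw [le_div_iff₀ hsqrt0]
  nlinarith [pow_pos hb n]

lemma four_rpow_lt_three : (4 : ℝ) ^ (0.7924 : ℝ) < 3 := by
  rw [← pow_lt_pow_iff_left₀ (by positivity) (by norm_num) (show 2500 ≠ 0 by norm_num),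
    ← Real.rpow_natCast, ← Real.rpow_mul (by norm_num),
    show (0.7924 : ℝ) * ((2500 : ℕ) : ℝ) = ((1981 : ℕ) : ℝ) by norm_num, Real.rpow_natCast]
  exact_mod_cast (by decide +kernel : 4 ^ 1981 < 3 ^ 2500)

theorem stmt2 :
    (∃ c : ℝ, 0 < c ∧ ∀ n : ℕ, 1 ≤ n →
      c * 3 ^ n / Real.sqrt n ≤ (rAP 3 4 n : ℝ)) ∧
    (∃ N : ℕ, ∀ n : ℕ, N ≤ n → ∃ S : Finset (Fin n → ZMod 4),
      ProgFree 4 3 S ∧ (4 : ℝ) ^ (0.7924 * (n : ℝ)) ≤ (S.card : ℝ)) := by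
  refine ⟨⟨3 / 14, by norm_num, fun n hn => ?_⟩, ?_⟩
  · obtain ⟨k, hk⟩ := exists_card_ternarySlice_ge hn
    exact hk.trans (by exact_mod_cast card_le_rAP (progFree_ternarySlice n k))
  · obtain ⟨N, hN⟩ := eventually_atTop.1 (eventually_pow_le_mul_pow_div_sqrt
      (by positivity) four_rpow_lt_three (by norm_num : (0 : ℝ) < 3 / 14))
    refine ⟨max N 1, fun n hn => ?_⟩
    obtain ⟨k, hk⟩ := exists_card_ternarySlice_ge (le_of_max_le_right hn)
    refine ⟨ternarySlice n k, progFree_ternarySlice n k, ?_⟩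
    rw [Real.rpow_mul (by norm_num), Real.rpow_natCast]
    exact (hN n (le_of_max_le_left hn)).trans hk
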